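/- Let p ∈ ℂ such that p is not a positive integer (so (1−p)_k ≠ 0 for all k ∈ ℕ). For n ∈ ℕ define v_n = ((−1)^n (1−p)_n/(n+1)!) · ∑_{k=0}^{n} ((−1)^k k!/(1−p)_k) · (∑_{j=0}^{k} (−1)^j (−p−1)_j / j!). Then for every z ∈ ℂ with |z| < 1, the series −∑_{n≥0} v_n z^{n+1} converges with sum equal to (1+z)^p · log(1−z). Equivalently, for every n ∈ ℕ, v_n = ∑_{k=0}^{n} (−1)^k (−p)_k/(k!·(n−k+1)). -/

import Mathlib

open Finset

noncomputable def poch (w : ℂ) (k : ℕ) : ℂ := (ascPochhammer ℂ k).eval w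

lemma poch_zero (w : ℂ) : poch w 0 = 1 := by simp [poch]

lemma poch_succ (w : ℂ) (n : ℕ) : poch w (n + 1) = poch w n * (w + n) := by
  simp [poch, ascPochhammer_succ_eval]

lemma poch_succ_left (w : ℂ) (n : ℕ) : poch w (n + 1) = w * poch (w + 1) n := by
  simp [poch, ascPochhammer_succ_left, Polynomial.eval_comp]

lemma natC_ne (m : ℕ) : ((m : ℂ) + 1) ≠ 0 := by
  exact_mod_cast Nat.cast_ne_zero (R := ℂ).mpr m.succ_ne_zero

lemma factC_succ (k : ℕ) : ((Nat.factorial (k + 1) : ℂ)) = ((k : ℂ) + 1) * (Nat.factorial k : ℂ) := by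
  push_cast [Nat.factorial_succ]; ring

noncomputable def Cc (p : ℂ) (k : ℕ) : ℂ := (-1) ^ k * poch (-p) k / (Nat.factorial k : ℂ)

lemma Cc_zero (p : ℂ) : Cc p 0 = 1 := by simp [Cc, poch_zero]

lemma Cc_succ (p : ℂ) (k : ℕ) : ((k : ℂ) + 1) * Cc p (k + 1) = (p - k) * Cc p k := by
  have hf : (Nat.factorial k : ℂ) ≠ 0 := Nat.cast_ne_zero.mpr k.factorial_ne_zero
  have hf' : (Nat.factorial (k + 1) : ℂ) ≠ 0 := Nat.cast_ne_zero.mpr (k + 1).factorial_ne_zero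
  rw [Cc, Cc]
  field_simp
  rw [poch_succ, factC_succ, pow_succ]
  ring

lemma Cc_succ' (p : ℂ) (k : ℕ) : Cc p (k + 1) = (p - k) * Cc p k / ((k : ℂ) + 1) := by
  rw [eq_div_iff (natC_ne k)]; linear_combination Cc_succ p k

lemma pascal (p : ℂ) (j : ℕ) :
    (-1 : ℂ) ^ (j + 1) * poch (-p - 1) (j + 1) / (Nat.factorial (j + 1) : ℂ) =
      Cc p (j + 1) + Cc p j := by
  have hf : (Nat.factorial j : ℂ) ≠ 0 := Nat.cast_ne_zero.mpr j.factorial_ne_zero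
  have h1 : poch (-p - 1) (j + 1) = (-p - 1) * poch (-p) j := by
    rw [poch_succ_left]; norm_num
  have hf' : (Nat.factorial (j + 1) : ℂ) ≠ 0 := Nat.cast_ne_zero.mpr (j + 1).factorial_ne_zero
  rw [h1, Cc_succ', Cc, factC_succ, pow_succ]
  field_simp [natC_ne j]
  ring

noncomputable def Ss (p : ℂ) (n : ℕ) : ℂ :=
  ∑ j ∈ range (n + 1), (-1 : ℂ) ^ j * poch (-p - 1) j / (Nat.factorial j : ℂ)

noncomputable def Ww (p : ℂ) (n : ℕ) : ℂ :=
  ∑ k ∈ range (n + 1), Cc p k * (((n - k : ℕ) : ℂ) + 1)⁻¹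

lemma Ss_eq (p : ℂ) (n : ℕ) :
    Ss p (n + 1) = (∑ k ∈ range (n + 2), Cc p k) + ∑ k ∈ range (n + 1), Cc p k := by
  rw [Ss, Finset.sum_range_succ' (fun j => (-1 : ℂ) ^ j * poch (-p - 1) j / (Nat.factorial j : ℂ))]
  have h0 : (-1 : ℂ) ^ 0 * poch (-p - 1) 0 / (Nat.factorial 0 : ℂ) = 1 := by
    simp [poch_zero]
  rw [h0]
  have : ∀ j ∈ range (n + 1), (-1 : ℂ) ^ (j + 1) * poch (-p - 1) (j + 1) / (Nat.factorial (j + 1) : ℂ)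
      = Cc p (j + 1) + Cc p j := fun j _ => pascal p j
  rw [Finset.sum_congr rfl this, Finset.sum_add_distrib,
    Finset.sum_range_succ' (fun k => Cc p k) (n + 1), Cc_zero]
  ring

lemma rec_w (p : ℂ) (n : ℕ) :
    ((n : ℂ) + 2) * Ww p (n + 1) = (p - ((n : ℂ) + 1)) * Ww p n + Ss p (n + 1) := by
  have A : ((n : ℂ) + 2) * Ww p (n + 1) = (∑ k ∈ range (n + 2), Cc p k) +
      ∑ k ∈ range (n + 1), (((k : ℂ) + 1) * Cc p (k + 1)) * (((n - k : ℕ) : ℂ) + 1)⁻¹ := by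
    rw [Ww, Finset.mul_sum]
    have step : ∀ k ∈ range (n + 1 + 1),
        ((n : ℂ) + 2) * (Cc p k * (((n + 1 - k : ℕ) : ℂ) + 1)⁻¹) =
        Cc p k + (k : ℂ) * Cc p k * (((n + 1 - k : ℕ) : ℂ) + 1)⁻¹ := by
      intro k hk
      have hk' : k ≤ n + 1 := by simpa [Nat.lt_succ_iff] using Finset.mem_range.mp hk
      have hcast : ((n + 1 - k : ℕ) : ℂ) = ((n : ℂ) + 1) - (k : ℂ) := by
        push_cast [Nat.cast_sub hk']; ring
      have hne : ((n : ℂ) + 1 - (k : ℂ) + 1) ≠ 0 := by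
        rw [← hcast]; exact natC_ne _
      rw [hcast]
      field_simp
      ring
    rw [Finset.sum_congr rfl step, Finset.sum_add_distrib]
    congr 1
    rw [Finset.sum_range_succ' (fun k => (k : ℂ) * Cc p k * (((n + 1 - k : ℕ) : ℂ) + 1)⁻¹)]
    simp only [Nat.cast_zero, zero_mul, add_zero, Nat.succ_sub_succ]
    apply Finset.sum_congr rfl
    intro k _
    push_cast
    ring
  have B : (p - ((n : ℂ) + 1)) * Ww p n =
      (∑ k ∈ range (n + 1), (((k : ℂ) + 1) * Cc p (k + 1)) * (((n - k : ℕ) : ℂ) + 1)⁻¹) -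
      ∑ k ∈ range (n + 1), Cc p k := by
    rw [Ww, Finset.mul_sum]
    have step : ∀ k ∈ range (n + 1),
        (p - ((n : ℂ) + 1)) * (Cc p k * (((n - k : ℕ) : ℂ) + 1)⁻¹) =
        (((k : ℂ) + 1) * Cc p (k + 1)) * (((n - k : ℕ) : ℂ) + 1)⁻¹ - Cc p k := by
      intro k hk
      have hk' : k ≤ n := by simpa [Nat.lt_succ_iff] using Finset.mem_range.mp hk
      have hcast : ((n - k : ℕ) : ℂ) = (n : ℂ) - (k : ℂ) := by
        push_cast [Nat.cast_sub hk']; ring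
      have hne : ((n : ℂ) - (k : ℂ) + 1) ≠ 0 := by
        rw [← hcast]; exact natC_ne _
      rw [Cc_succ, hcast]
      field_simp
      ring
    rw [Finset.sum_congr rfl step, Finset.sum_sub_distrib]
  rw [Ss_eq]
  linear_combination A - B

lemma poch_ne (p : ℂ) (hp : ∀ k : ℕ, p ≠ (k : ℂ) + 1) : ∀ n : ℕ, poch (1 - p) n ≠ 0 := by
  intro n
  induction n with
  | zero => simp [poch_zero]
  | succ n ih =>
    rw [poch_succ]
    refine mul_ne_zero ih ?_
    intro h
    exact hp n (by linear_combination -h)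

lemma hasDeriv_onePow (q : ℂ) {w : ℂ} (hw : w ∈ Metric.ball (0 : ℂ) 1) :
    HasDerivAt (fun u : ℂ => (1 + u) ^ q) (q * (1 + w) ^ (q - 1)) w := by
  have hw' : ‖w‖ < 1 := by simpa [Metric.mem_ball, dist_zero_right] using hw
  have hre : (1 + w) ∈ Complex.slitPlane := by
    refine Or.inl ?_
    have := Complex.abs_re_le_norm w
    simp only [Complex.add_re, Complex.one_re]
    have h2 := abs_lt.mp (lt_of_le_of_lt this hw')
    linarith [h2.1]
  have hd : HasDerivAt (fun u : ℂ => 1 + u) 1 w := (hasDerivAt_id w).const_add 1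
  simpa using hd.cpow_const hre

lemma iter_deriv_onePow (p : ℂ) (n : ℕ) :
    ∀ w ∈ Metric.ball (0 : ℂ) 1,
      iteratedDeriv n (fun u : ℂ => (1 + u) ^ p) w
        = ((-1) ^ n * poch (-p) n) * (1 + w) ^ (p - (n : ℂ)) := by
  induction n with
  | zero =>
    intro w _
    simp [poch_zero]
  | succ n ih =>
    intro w hw
    rw [iteratedDeriv_succ]
    have hev : iteratedDeriv n (fun u : ℂ => (1 + u) ^ p)
        =ᶠ[nhds w] fun u => ((-1) ^ n * poch (-p) n) * (1 + u) ^ (p - (n : ℂ)) := by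
      filter_upwards [Metric.isOpen_ball.mem_nhds hw] with u hu using ih u hu
    rw [hev.deriv_eq]
    rw [((hasDeriv_onePow (p - (n : ℂ)) hw).const_mul ((-1 : ℂ) ^ n * poch (-p) n)).deriv]
    have hexp : p - (n : ℂ) - 1 = p - ((n + 1 : ℕ) : ℂ) := by push_cast; ring
    rw [hexp, poch_succ, pow_succ]
    ring

lemma binomSeries (p : ℂ) {z : ℂ} (hz : ‖z‖ < 1) :
    HasSum (fun k : ℕ => Cc p k * z ^ k) ((1 + z) ^ p) := by
  have hdiff : DifferentiableOn ℂ (fun u : ℂ => (1 + u) ^ p) (Metric.ball 0 1) :=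
    fun w hw => (hasDeriv_onePow p hw).differentiableAt.differentiableWithinAt
  have hmem : z ∈ Metric.ball (0 : ℂ) 1 := by
    simpa [Metric.mem_ball, dist_zero_right] using hz
  have H := Complex.hasSum_taylorSeries_on_ball hdiff hmem
  have key : ∀ k : ℕ, ((Nat.factorial k : ℂ))⁻¹ • (z - 0) ^ k •
      iteratedDeriv k (fun u : ℂ => (1 + u) ^ p) 0 = Cc p k * z ^ k := by
    intro k
    rw [iter_deriv_onePow p k 0 (by simp [Metric.mem_ball])]
    simp only [smul_eq_mul, sub_zero, add_zero, Complex.one_cpow, mul_one, Cc]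
    rw [div_eq_mul_inv]
    ring
  rw [show (fun k : ℕ => ((Nat.factorial k : ℂ))⁻¹ • (z - 0) ^ k •
      iteratedDeriv k (fun u : ℂ => (1 + u) ^ p) 0) = fun k => Cc p k * z ^ k from funext key] at H
  exact H

lemma binomSummable (p : ℂ) {z : ℂ} (hz : ‖z‖ < 1) :
    Summable fun k : ℕ => ‖Cc p k * z ^ k‖ := by
  refine summable_of_ratio_norm_eventually_le (r := (1 + ‖z‖) / 2) (by linarith) ?_
  rw [Filter.eventually_atTop]
  refine ⟨⌈2 * ‖p‖ / (1 - ‖z‖)⌉₊, fun k hk => ?_⟩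
  have hk' : 2 * ‖p‖ / (1 - ‖z‖) ≤ (k : ℝ) := le_trans (Nat.le_ceil _) (by exact_mod_cast hk)
  have hz1 : (0 : ℝ) < 1 - ‖z‖ := by linarith
  have h2 : 2 * ‖p‖ ≤ (k : ℝ) * (1 - ‖z‖) := by
    rw [div_le_iff₀ hz1] at hk'; linarith
  have hknorm : ‖((k : ℂ) + 1)‖ = (k : ℝ) + 1 := by
    rw [show ((k : ℂ) + 1) = ((k + 1 : ℕ) : ℂ) by push_cast; ring, Complex.norm_natCast]
    push_cast; ring
  have hCc : Cc p (k + 1) = (p - k) * Cc p k / ((k : ℂ) + 1) := Cc_succ' p k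
  have hkpos : (0 : ℝ) < (k : ℝ) + 1 := by positivity
  have hnorm1 : ‖p - (k : ℂ)‖ ≤ ‖p‖ + k := by
    refine (norm_sub_le _ _).trans ?_
    simp [Complex.norm_natCast]
  have hmain : ‖p - (k : ℂ)‖ * ‖z‖ / ((k : ℝ) + 1) ≤ (1 + ‖z‖) / 2 := by
    rw [div_le_div_iff₀ hkpos (by norm_num)]
    nlinarith [mul_le_mul_of_nonneg_right hnorm1 (norm_nonneg z),
      mul_le_of_le_one_right (norm_nonneg p) hz.le, norm_nonneg z, norm_nonneg p,
      Nat.cast_nonneg (α := ℝ) k]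
  have hcalc : ‖Cc p (k + 1) * z ^ (k + 1)‖
      = (‖p - (k : ℂ)‖ * ‖z‖ / ((k : ℝ) + 1)) * ‖Cc p k * z ^ k‖ := by
    rw [hCc, pow_succ]
    rw [norm_mul, norm_mul, norm_div, norm_mul, hknorm, norm_mul, norm_pow]
    ring
  rw [norm_norm, norm_norm, hcalc]
  exact mul_le_mul_of_nonneg_right hmain (norm_nonneg _)

lemma logSeries {z : ℂ} (hz : ‖z‖ < 1) :
    HasSum (fun m : ℕ => -(z ^ (m + 1) / ((m : ℂ) + 1))) (Complex.log (1 - z)) := by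
  have h := (Complex.hasSum_taylorSeries_neg_log hz).neg
  rw [neg_neg] at h
  have h3 : HasSum (fun n : ℕ => -(z ^ (n + 1) / (((n + 1 : ℕ)) : ℂ)))
      (Complex.log (1 - z)) := by
    rw [hasSum_nat_add_iff (f := fun n : ℕ => -(z ^ n / (n : ℂ))) 1]
    simpa using h
  have : (fun m : ℕ => -(z ^ (m + 1) / ((m : ℂ) + 1)))
      = fun n : ℕ => -(z ^ (n + 1) / (((n + 1 : ℕ)) : ℂ)) := by
    funext n; push_cast; ring
  rw [this]
  exact h3

lemma logSummable {z : ℂ} (hz : ‖z‖ < 1) :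
    Summable fun m : ℕ => ‖-(z ^ (m + 1) / ((m : ℂ) + 1))‖ := by
  refine Summable.of_nonneg_of_le (fun m => norm_nonneg _) (fun m => ?_)
    ((summable_geometric_of_lt_one (norm_nonneg z) hz).mul_left ‖z‖)
  rw [norm_neg, norm_div]
  have hknorm : ‖((m : ℂ) + 1)‖ = (m : ℝ) + 1 := by
    rw [show ((m : ℂ) + 1) = ((m + 1 : ℕ) : ℂ) by push_cast; ring, Complex.norm_natCast]
    push_cast; ring
  rw [hknorm, norm_pow, pow_succ]
  have h1 : (1 : ℝ) ≤ (m : ℝ) + 1 := by linarith [Nat.cast_nonneg (α := ℝ) m]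
  calc ‖z‖ ^ m * ‖z‖ / ((m : ℝ) + 1) ≤ ‖z‖ ^ m * ‖z‖ / 1 := by gcongr
    _ = ‖z‖ * ‖z‖ ^ m := by ring

theorem stmt_12 (p : ℂ) (hp : ∀ k : ℕ, p ≠ (k : ℂ) + 1)
    (v : ℕ → ℂ)
    (hv : ∀ n : ℕ, v n = (-1 : ℂ) ^ n * poch (1 - p) n / (Nat.factorial (n + 1) : ℂ) *
      ∑ k ∈ range (n + 1), (-1 : ℂ) ^ k * (Nat.factorial k : ℂ) / poch (1 - p) k *
        ∑ j ∈ range (k + 1), (-1 : ℂ) ^ j * poch (-p - 1) j / (Nat.factorial j : ℂ)) :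
    (∀ z : ℂ, ‖z‖ < 1 →
      HasSum (fun n : ℕ => -(v n * z ^ (n + 1))) ((1 + z) ^ p * Complex.log (1 - z))) ∧
    (∀ n : ℕ, v n = ∑ k ∈ range (n + 1),
      (-1 : ℂ) ^ k * poch (-p) k / ((Nat.factorial k : ℂ) * (((n - k : ℕ) : ℂ) + 1))) := by
  have hv' : ∀ n : ℕ, v n = (-1 : ℂ) ^ n * poch (1 - p) n / (Nat.factorial (n + 1) : ℂ) *
      ∑ k ∈ range (n + 1), (-1 : ℂ) ^ k * (Nat.factorial k : ℂ) / poch (1 - p) k * Ss p k := by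
    intro n; rw [hv n]; rfl
  have hPne := poch_ne p hp
  have rec_v : ∀ n : ℕ, ((n : ℂ) + 2) * v (n + 1) = (p - ((n : ℂ) + 1)) * v n + Ss p (n + 1) := by
    intro n
    have hfne : (Nat.factorial (n + 1) : ℂ) ≠ 0 := Nat.cast_ne_zero.mpr (n + 1).factorial_ne_zero
    have hP'ne : poch (1 - p) (n + 1) ≠ 0 := hPne (n + 1)
    have hn2' : ((n : ℂ) + 2) ≠ 0 := by
      have h := natC_ne (n + 1)
      intro hcon; apply h; push_cast; linear_combination hcon
    have hf1 : (Nat.factorial (n + 1 + 1) : ℂ) = ((n : ℂ) + 2) * (Nat.factorial (n + 1) : ℂ) := by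
      push_cast [Nat.factorial_succ]; ring
    have hpow : ((-1 : ℂ)) ^ (n + 1) * ((-1 : ℂ)) ^ (n + 1) = 1 := by
      rw [← pow_add, ← two_mul, pow_mul]; norm_num
    have e2 : (-1 : ℂ) ^ (n + 1) * poch (1 - p) (n + 1) / (Nat.factorial (n + 1) : ℂ) *
        ((-1 : ℂ) ^ (n + 1) * (Nat.factorial (n + 1) : ℂ) / poch (1 - p) (n + 1) * Ss p (n + 1))
        = Ss p (n + 1) := by
      have step : (-1 : ℂ) ^ (n + 1) * poch (1 - p) (n + 1) / (Nat.factorial (n + 1) : ℂ) *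
          ((-1 : ℂ) ^ (n + 1) * (Nat.factorial (n + 1) : ℂ) / poch (1 - p) (n + 1) * Ss p (n + 1))
          = ((-1 : ℂ) ^ (n + 1) * (-1 : ℂ) ^ (n + 1)) *
            (poch (1 - p) (n + 1) * (poch (1 - p) (n + 1))⁻¹) *
            ((Nat.factorial (n + 1) : ℂ) * ((Nat.factorial (n + 1) : ℂ))⁻¹) * Ss p (n + 1) := by
        ring
      rw [step, hpow, mul_inv_cancel₀ hP'ne, mul_inv_cancel₀ hfne]
      ring
    have h1 := hv' (n + 1)
    rw [Finset.sum_range_succ] at h1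
    rw [h1, hf1, ← mul_assoc, mul_div_assoc', mul_div_mul_left _ _ hn2', mul_add, e2, hv' n,
      poch_succ, pow_succ]
    ring
  have hvW : ∀ n : ℕ, v n = Ww p n := by
    intro n
    induction n with
    | zero =>
      rw [hv 0]
      simp [Ww, Cc, poch_zero]
    | succ n ih =>
      have h2 : ((n : ℂ) + 2) ≠ 0 := by
        rw [show ((n : ℂ) + 2) = ((n + 2 : ℕ) : ℂ) by push_cast; ring]
        exact Nat.cast_ne_zero.mpr (Nat.succ_ne_zero (n + 1))
      apply mul_left_cancel₀ h2
      rw [rec_v n, rec_w p n, ih]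
  constructor
  · intro z hzabs
    have hz : ‖z‖ < 1 := hzabs
    have hb := binomSeries p hz
    have hl := logSeries hz
    have hc := hasSum_sum_range_mul_of_summable_norm (binomSummable p hz) (logSummable hz)
    rw [hb.tsum_eq, hl.tsum_eq] at hc
    convert hc using 1
    · rfl
    funext n
    rw [hvW n, Ww, Finset.sum_mul, neg_eq_iff_eq_neg, ← Finset.sum_neg_distrib]
    apply Finset.sum_congr rfl
    intro k hk
    have hk' : k ≤ n := by simpa [Nat.lt_succ_iff] using Finset.mem_range.mp hk
    have hzp : z ^ k * z ^ (n - k + 1) = z ^ (n + 1) := by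
      rw [← pow_add]; congr 1; omega
    rw [← hzp]
    ring
  · intro n
    rw [hvW n, Ww]
    apply Finset.sum_congr rfl
    intro k _
    have hfne : (Nat.factorial k : ℂ) ≠ 0 := Nat.cast_ne_zero.mpr k.factorial_ne_zero
    have hdne : (((n - k : ℕ) : ℂ) + 1) ≠ 0 := natC_ne _
    rw [Cc]
    field_simp
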